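/- Two-variable symmetry: for positive integers w1, w2, any y ∈ R and n ≥ 0: w1 · Σ_{k=0}^n C(n,k) · B_{k,q^{w2}}(w1·y) · S_{n−k,q^{w1}}(w2 − 1) · w1^{n−k} · w2^k = w2 · Σ_{k=0}^n C(n,k) · B_{k,q^{w1}}(w2·y) · S_{n−k,q^{w2}}(w1 − 1) · w2^{n−k} · w1^k. -/

import Mathlib

/-! The exponential generating function of `b_n(q, L)` is `(t + L) / (q eᵗ - 1)`. With
`Y = q eᵗ`, that of `S_{n,q^{w₁}}(w₂ - 1) w₁ⁿ` is the geometric sum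
`Σ_{i<w₂} Y^{w₁ i} = (Y^{w₁w₂} - 1) / (Y^{w₁} - 1)`, so the left-hand side has generating function
`w₁ w₂ (t + L) e^{w₁w₂yt} (Y^{w₁w₂} - 1) / ((Y^{w₁} - 1) (Y^{w₂} - 1))`, symmetric in `w₁, w₂`.
The denominators are units of `R⟦t⟧` because their constant terms `q^w - 1` are. -/

open Finset

/-- The q-analogue of power sums: `S_{k,q}(m) = Σ_{i=0}^m i^k q^i` (with `0^0 = 1`). -/
def qS {R : Type*} [CommRing R] (q : R) (k m : ℕ) : R :=
  ∑ i ∈ Finset.range (m + 1), (i : R) ^ k * q ^ i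

/-- q-Bernoulli numbers `b_n(q, L)`: `(q-1) b_0 = L` and for `n ≥ 1`,
`(q-1) b_n = [n = 1] - q Σ_{k<n} C(n,k) b_k`. -/
noncomputable def qb {R : Type*} [CommRing R] (q L : R) : ℕ → R
  | 0 => Ring.inverse (q - 1) * L
  | n + 1 =>
      Ring.inverse (q - 1) *
        ((if n + 1 = 1 then (1 : R) else 0) -
          q * ∑ k ∈ (Finset.range (n + 1)).attach,
              ((n + 1).choose k.1 : R) * qb q L k.1)
  termination_by n => n
  decreasing_by exact Finset.mem_range.mp k.2

/-- q-Bernoulli polynomials `B_{n,q}(x) = Σ_{k=0}^n C(n,k) b_k(q,L) x^{n-k}`. -/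
noncomputable def qB {R : Type*} [CommRing R] (q L : R) (n : ℕ) (x : R) : R :=
  ∑ k ∈ Finset.range (n + 1), (n.choose k : R) * qb q L k * x ^ (n - k)

open Nat

namespace PowerSeries

lemma rescale_C {A : Type*} [CommRing A] (a c : A) : rescale a (C c) = C c := by
  ext n
  rcases n with _ | n <;> simp [coeff_C]

section Egf
variable {A : Type*} [CommRing A] [Algebra ℚ A]

noncomputable def egf (a : ℕ → A) : A⟦X⟧ :=
  mk fun n => algebraMap ℚ A (1 / n !) * a n

@[simp]
lemma coeff_egf (a : ℕ → A) (n : ℕ) : coeff n (egf a) = algebraMap ℚ A (1 / n !) * a n :=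
  coeff_mk _ _

lemma egf_injective : Function.Injective (egf : (ℕ → A) → A⟦X⟧) := by
  intro a b h
  funext n
  have hn := congrArg (fun f => algebraMap ℚ A n ! * coeff n f) h
  have hfact : (n ! : ℚ) ≠ 0 := by positivity
  simpa only [coeff_egf, ← mul_assoc, ← map_mul, mul_one_div_cancel hfact, map_one, one_mul]
    using hn

lemma egf_mul (a b : ℕ → A) :
    egf a * egf b = egf fun n => ∑ k ∈ range (n + 1), (n.choose k : A) * a k * b (n - k) := by
  ext n
  rw [coeff_mul, sum_antidiagonal_eq_sum_range_succ (fun i j => coeff i (egf a) * coeff j (egf b)),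
    coeff_egf, mul_sum]
  refine sum_congr rfl fun k hk => ?_
  obtain ⟨j, rfl⟩ := Nat.exists_eq_add_of_le (mem_range_succ_iff.1 hk)
  have hfact : (1 / k ! : ℚ) * (1 / j !) = (k + j).choose k * (1 / (k + j)!) := by
    rw [Nat.cast_choose ℚ (Nat.le_add_right k j), Nat.add_sub_cancel_left]
    field_simp
  simp only [coeff_egf, Nat.add_sub_cancel_left]
  calc algebraMap ℚ A (1 / k !) * a k * (algebraMap ℚ A (1 / j !) * b j)
      = algebraMap ℚ A ((1 / k ! : ℚ) * (1 / j !)) * a k * b j := by rw [map_mul]; ring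
    _ = _ := by rw [hfact, map_mul, map_natCast]; ring

lemma C_mul_egf (c : A) (a : ℕ → A) : C c * egf a = egf fun n => c * a n := by
  ext n
  simp only [coeff_C_mul, coeff_egf]
  ring

lemma rescale_egf (c : A) (a : ℕ → A) : rescale c (egf a) = egf fun n => c ^ n * a n := by
  ext n
  simp only [coeff_rescale, coeff_egf]
  ring

lemma egf_sub (a b : ℕ → A) : egf (a - b) = egf a - egf b := by
  ext n
  simp only [coeff_egf, map_sub, Pi.sub_apply]
  ring

lemma egf_sum {ι : Type*} (s : Finset ι) (a : ι → ℕ → A) :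
    egf (fun n => ∑ i ∈ s, a i n) = ∑ i ∈ s, egf (a i) := by
  ext n
  simp only [coeff_egf, map_sum, mul_sum]

lemma rescale_exp_eq_egf (x : A) : rescale x (exp A) = egf fun n => x ^ n := by
  ext n
  simp only [coeff_rescale, coeff_exp, coeff_egf]
  ring

lemma exp_eq_egf_one : exp A = egf fun _ => 1 := by
  ext n
  simp only [coeff_exp, coeff_egf, mul_one]

end Egf

end PowerSeries

open PowerSeries

lemma qb_recurrence {R : Type*} [CommRing R] (q L : R) (hq : IsUnit (q - 1)) (m : ℕ) :
    q * ∑ k ∈ range (m + 1), (m.choose k : R) * qb q L k - qb q L m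
      = (if m = 1 then 1 else 0) + (if m = 0 then L else 0) := by
  cases m with
  | zero =>
    have h : (q - 1) * qb q L 0 = L := by
      rw [qb, ← mul_assoc, Ring.mul_inverse_cancel _ hq, one_mul]
    norm_num
    linear_combination h
  | succ m =>
    have h : (q - 1) * qb q L (m + 1) = (if m + 1 = 1 then 1 else 0) -
        q * ∑ k ∈ range (m + 1), ((m + 1).choose k : R) * qb q L k := by
      rw [qb, ← mul_assoc, Ring.mul_inverse_cancel _ hq, one_mul,
        sum_attach (range (m + 1)) fun k => ((m + 1).choose k : R) * qb q L k]
    rw [sum_range_succ, Nat.choose_self, cast_one, one_mul, if_neg m.succ_ne_zero, add_zero]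
    linear_combination h

section GeneratingFunctions
variable {A : Type*} [CommRing A] [Algebra ℚ A]

lemma egf_qb_mul_sub_one (q L : A) (hq : IsUnit (q - 1)) :
    egf (qb q L) * (C q * exp A - 1) = X + C L := by
  rw [mul_sub, mul_one, mul_left_comm, exp_eq_egf_one, egf_mul, C_mul_egf, ← egf_sub]
  ext n
  simp only [coeff_egf, Pi.sub_apply, mul_one, qb_recurrence q L hq, map_add, coeff_X, coeff_C]
  rcases n with _ | _ | n <;> simp

lemma egf_qB (q L x : A) : egf (fun n => qB q L n x) = egf (qb q L) * rescale x (exp A) := by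
  rw [rescale_exp_eq_egf, egf_mul]
  rfl

lemma egf_qS_mul_pow (q c : A) (m : ℕ) :
    egf (fun n => qS q n m * c ^ n) =
      ∑ i ∈ range (m + 1), C (q ^ i) * rescale (c * i) (exp A) := by
  simp only [qS, sum_mul]
  rw [egf_sum]
  refine sum_congr rfl fun i _ => ?_
  rw [rescale_exp_eq_egf, C_mul_egf]
  congr 1
  funext n
  ring

lemma C_mul_exp_pow (q : A) (w : ℕ) :
    (C q * exp A) ^ w = C (q ^ w) * rescale (w : A) (exp A) := by
  rw [mul_pow, map_pow, exp_pow_eq_rescale_exp]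

end GeneratingFunctions

noncomputable def symmSide {A : Type*} [CommRing A] (q L y : A) (a b n : ℕ) : A :=
  (a : A) * ∑ k ∈ range (n + 1), (n.choose k : A) *
    qB (q ^ b) ((b : A) * L) k ((a : A) * y) * qS (q ^ a) (n - k) (b - 1) *
    (a : A) ^ (n - k) * (b : A) ^ k

lemma egf_symmSide_mul {A : Type*} [CommRing A] [Algebra ℚ A] (q L y : A) (a b : ℕ)
    (hb : 0 < b) (hqb : IsUnit (q ^ b - 1)) :
    egf (symmSide q L y a b) * (((C q * exp A) ^ a - 1) * ((C q * exp A) ^ b - 1))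
      = C ((a : A) * b) * (X + C L) * rescale ((a : A) * b * y) (exp A) *
          ((C q * exp A) ^ (a * b) - 1) := by
  have hfactor : egf (symmSide q L y a b)
      = C (a : A) * rescale (b : A) (egf (fun k => qB (q ^ b) ((b : A) * L) k ((a : A) * y))) *
          egf (fun n => qS (q ^ a) n (b - 1) * a ^ n) := by
    rw [rescale_egf, C_mul_egf, egf_mul]
    congr 1
    funext n
    rw [symmSide, mul_sum]
    refine sum_congr rfl fun k _ => ?_
    ring
  have hqB : rescale (b : A) (egf (fun k => qB (q ^ b) ((b : A) * L) k ((a : A) * y)))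
      = rescale (b : A) (egf (qb (q ^ b) ((b : A) * L))) * rescale ((a : A) * b * y) (exp A) := by
    rw [egf_qB, map_mul, rescale_rescale, mul_right_comm]
  have hqb : rescale (b : A) (egf (qb (q ^ b) ((b : A) * L))) * ((C q * exp A) ^ b - 1)
      = C (b : A) * (X + C L) := by
    have := congrArg (rescale (b : A)) (egf_qb_mul_sub_one (q ^ b) ((b : A) * L) hqb)
    rw [map_mul, map_sub, map_mul, map_one, map_add, rescale_X, rescale_C, rescale_C,
      map_mul] at this
    rw [C_mul_exp_pow, this]
    ring
  have hqS : egf (fun n => qS (q ^ a) n (b - 1) * a ^ n) * ((C q * exp A) ^ a - 1)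
      = (C q * exp A) ^ (a * b) - 1 := by
    rw [egf_qS_mul_pow, Nat.sub_add_cancel hb, pow_mul, ← geom_sum_mul ((C q * exp A) ^ a) b]
    congr 1
    refine sum_congr rfl fun i _ => ?_
    rw [← pow_mul q, ← pow_mul (C q * exp A), C_mul_exp_pow, Nat.cast_mul]
  rw [hfactor, hqB, map_mul]
  linear_combination (C (a : A) * rescale ((a : A) * b * y) (exp A)) *
    (egf (fun n => qS (q ^ a) n (b - 1) * a ^ n) * ((C q * exp A) ^ a - 1) * hqb +
      C (b : A) * (X + C L) * hqS)

theorem symm_two_var {R : Type*} [CommRing R] [Algebra ℚ R] (q L : R)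
    (hq : ∀ w : ℕ, 0 < w → IsUnit (q ^ w - 1)) (w1 w2 : ℕ) (hw1 : 0 < w1) (hw2 : 0 < w2) (y : R) (n : ℕ) :
    (w1 : R) * ∑ k ∈ Finset.range (n + 1), (n.choose k : R) *
        qB (q ^ w2) ((w2 : R) * L) k ((w1 : R) * y) * qS (q ^ w1) (n - k) (w2 - 1) *
        (w1 : R) ^ (n - k) * (w2 : R) ^ k
      = (w2 : R) * ∑ k ∈ Finset.range (n + 1), (n.choose k : R) *
          qB (q ^ w1) ((w1 : R) * L) k ((w2 : R) * y) * qS (q ^ w2) (n - k) (w1 - 1) *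
          (w2 : R) ^ (n - k) * (w1 : R) ^ k := by
  set Y := C q * exp R
  have hY : ∀ w, 0 < w → IsUnit (Y ^ w - 1) := fun w hw => by
    rw [isUnit_iff_constantCoeff]
    simpa [Y] using hq w hw
  have h12 := egf_symmSide_mul q L y w1 w2 hw2 (hq w2 hw2)
  have h21 := egf_symmSide_mul q L y w2 w1 hw1 (hq w1 hw1)
  rw [Nat.mul_comm w2 w1, mul_comm (w2 : R) (w1 : R), mul_comm (Y ^ w2 - 1)] at h21
  have := ((hY w1 hw1).mul (hY w2 hw2)).mul_right_cancel (h12.trans h21.symm)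
  exact congrFun (egf_injective this) n
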